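/- Let R be a commutative ring, G a finite group acting on R by ring automorphisms, and M a rank-one free R-module with semilinear G-action. If the induced G-action on M ⊗_R k is trivial for the residue field k at every maximal ideal (equivalently, at every geometric point), and G has order invertible in R, then M admits a G-invariant generator; i.e., M ≅ R as an R[G]-module where G acts on R semilinearly, so M descends to an R^G-module with M ≅ M^G ⊗_{R^G} R. -/
import Mathlib


/-- Let G be a finite group of order invertible in R acting on R by ring automorphisms,
and M a rank-one free R-module with semilinear G-action. If the induced action on
M ⊗ R/𝔪 is trivial for every maximal ideal 𝔪, then M admits a G-invariant generator. -/
theorem stmt17 {R : Type*} [CommRing R] {G : Type*} [Group G] [Fintype G]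
    [MulSemiringAction G R]
    (hcard : IsUnit ((Fintype.card G : ℕ) : R))
    {M : Type*} [AddCommGroup M] [Module R M] [DistribMulAction G M]
    (hsemi : ∀ (g : G) (a : R) (m : M), g • (a • m) = (g • a) • (g • m))
    (e₀ : M) (he₀ : ∀ m : M, ∃! a : R, a • e₀ = m)
    (htriv : ∀ (𝔪 : Ideal R), 𝔪.IsMaximal → ∀ (g : G) (m : M),
      g • m - m ∈ (𝔪 • (⊤ : Submodule R M))) :
    ∃ e : M, (∀ g : G, g • e = e) ∧ (∀ m : M, ∃! a : R, a • e = m) := by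
  classical
  -- coefficient function
  set c : M → R := fun m => (he₀ m).choose with hc
  have hcspec : ∀ m : M, c m • e₀ = m := fun m => (he₀ m).choose_spec.1
  have hcuniq : ∀ (m : M) (a : R), a • e₀ = m → a = c m :=
    fun m a h => (he₀ m).choose_spec.2 a h
  have hadd : ∀ m m' : M, c (m + m') = c m + c m' := by
    intro m m'; symm; apply hcuniq; rw [add_smul, hcspec, hcspec]
  have hsmul : ∀ (a : R) (m : M), c (a • m) = a * c m := by
    intro a m; symm; apply hcuniq; rw [mul_smul, hcspec]
  have hone : c e₀ = 1 := (hcuniq e₀ 1 (one_smul R e₀)).symm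
  -- membership in 𝔪 • ⊤ forces the coefficient in 𝔪
  have hmem : ∀ (𝔪 : Ideal R) (m : M), m ∈ 𝔪 • (⊤ : Submodule R M) → c m ∈ 𝔪 := by
    intro 𝔪 m hm
    refine Submodule.smul_induction_on hm ?_ ?_
    · intro a ha n _
      rw [hsmul]; exact Ideal.mul_mem_right _ _ ha
    · intro x y hx hy
      rw [hadd]; exact Ideal.add_mem _ hx hy
  -- the averaged element
  set e : M := ∑ g : G, g • e₀ with he
  set s : R := ∑ g : G, c (g • e₀) with hs
  have hse : s • e₀ = e := by
    rw [hs, he, Finset.sum_smul]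
    exact Finset.sum_congr rfl fun g _ => hcspec _
  -- s ≡ |G| mod every maximal ideal
  have hjac : s - (Fintype.card G : R) ∈ Ideal.jacobson (⊥ : Ideal R) := by
    rw [Ideal.jacobson, Ideal.mem_sInf]
    rintro 𝔪 ⟨-, hmax⟩
    have : s - (Fintype.card G : R) = ∑ g : G, (c (g • e₀) - 1) := by
      rw [Finset.sum_sub_distrib, ← hs, Finset.sum_const, Finset.card_univ,
        nsmul_eq_mul, mul_one]
    rw [this]
    refine Ideal.sum_mem _ fun g _ => ?_
    have h1 : c (g • e₀ - e₀) ∈ 𝔪 := hmem 𝔪 _ (htriv 𝔪 hmax g e₀)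
    have h2 : c (g • e₀ - e₀) = c (g • e₀) - 1 := by
      have h := hadd (g • e₀ - e₀) e₀
      rw [sub_add_cancel, hone] at h
      linear_combination -h
    rwa [h2] at h1
  -- s is a unit
  have hsunit : IsUnit s := by
    obtain ⟨u, hu⟩ := hcard
    have hj : ∀ y : R, IsUnit ((s - (Fintype.card G : R)) * y + 1) :=
      Ideal.mem_jacobson_bot.mp hjac
    have := hj (↑u⁻¹)
    have key : s = ↑u * ((s - (Fintype.card G : R)) * ↑u⁻¹ + 1) := by
      rw [mul_add, mul_one, mul_comm (↑u : R) _, mul_assoc,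
        show (↑u⁻¹ * ↑u : R) = 1 from u.inv_mul, mul_one, hu]
      ring
    rw [key]
    exact u.isUnit.mul this
  obtain ⟨v, hv⟩ := hsunit
  refine ⟨e, ?_, ?_⟩
  · -- invariance
    intro g
    rw [he, Finset.smul_sum]
    refine Fintype.sum_equiv (Equiv.mulLeft g) _ _ fun h => ?_
    simp [mul_smul]
  · -- generation
    intro m
    refine ⟨c m * ↑v⁻¹, ?_, ?_⟩
    · show (c m * ↑v⁻¹) • e = m
      rw [← hse, smul_smul, mul_assoc,
        show ((↑v⁻¹ : R) * s) = 1 by rw [← hv]; exact v.inv_mul, mul_one, hcspec]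
    · intro b hb
      rw [← hse, smul_smul] at hb
      have h3 := hcuniq m (b * s) hb
      rw [← h3, ← hv, mul_assoc, v.mul_inv, mul_one]
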